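/- arXiv:1811.06493 — 3 statements merged into one kernel-verified Lean document; each statement's English description precedes it below -/
import Mathlib

section
/- Let F be a non-empty bounded subset of ℝⁿ and 0 ≤ θ < φ ≤ 1. Then the lower θ-intermediate dimension of F is at most the lower φ-intermediate dimension of F, which is at most (lower θ-intermediate dimension of F) + (1 − θ/φ)(n − lower θ-intermediate dimension of F). -/
open Set

noncomputable section

/-- There is a countable cover of `F` by sets whose diameters all lie between `lo` and `hi`,
with `s`-power diameter sum at most `ε`. -/
def ICov {X : Type} [PseudoEMetricSpace X] (F : Set X) (s lo hi ε : ℝ) : Prop :=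
  ∃ (ι : Type) (_ : Countable ι) (U : ι → Set X), F ⊆ ⋃ i, U i ∧
    (∀ i, ENNReal.ofReal lo ≤ EMetric.diam (U i) ∧ EMetric.diam (U i) ≤ ENNReal.ofReal hi) ∧
    ∑' i, EMetric.diam (U i) ^ s ≤ ENNReal.ofReal ε

/-- There is a countable cover of `F` with no diameter restrictions and
`s`-power diameter sum at most `ε`. -/
def HCov {X : Type} [PseudoEMetricSpace X] (F : Set X) (s ε : ℝ) : Prop :=
  ∃ (ι : Type) (_ : Countable ι) (U : ι → Set X), F ⊆ ⋃ i, U i ∧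
    ∑' i, EMetric.diam (U i) ^ s ≤ ENNReal.ofReal ε

/-- The lower `θ`-intermediate dimension. -/
def lowerIDim {X : Type} [PseudoEMetricSpace X] (F : Set X) (θ : ℝ) : ℝ :=
  if θ = 0 then sInf {s : ℝ | 0 ≤ s ∧ ∀ ε > 0, HCov F s ε}
  else sInf {s : ℝ | 0 ≤ s ∧ ∀ ε > 0, ∀ δ₀ > 0, ∃ δ : ℝ, 0 < δ ∧ δ ≤ δ₀ ∧
    ICov F s (δ ^ (1 / θ)) δ ε}

/-- The upper `θ`-intermediate dimension. -/
def upperIDim {X : Type} [PseudoEMetricSpace X] (F : Set X) (θ : ℝ) : ℝ :=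
  if θ = 0 then sInf {s : ℝ | 0 ≤ s ∧ ∀ ε > 0, HCov F s ε}
  else sInf {s : ℝ | 0 ≤ s ∧ ∀ ε > 0, ∃ δ₀ > (0:ℝ), ∀ δ : ℝ, 0 < δ → δ ≤ δ₀ →
    ICov F s (δ ^ (1 / θ)) δ ε}

/-- A countable cover of `F` by sets all of diameter exactly `δ`,
with `s`-power diameter sum at most `ε`. -/
def EqCov {X : Type} [PseudoEMetricSpace X] (F : Set X) (s δ ε : ℝ) : Prop :=
  ∃ (ι : Type) (_ : Countable ι) (U : ι → Set X), F ⊆ ⋃ i, U i ∧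
    (∀ i, EMetric.diam (U i) = ENNReal.ofReal δ) ∧
    ∑' i, EMetric.diam (U i) ^ s ≤ ENNReal.ofReal ε

/-- The lower box dimension. -/
def lowerBoxDim {X : Type} [PseudoEMetricSpace X] (F : Set X) : ℝ :=
  sInf {s : ℝ | 0 ≤ s ∧ ∀ ε > 0, ∀ δ₀ > 0, ∃ δ : ℝ, 0 < δ ∧ δ ≤ δ₀ ∧ EqCov F s δ ε}

/-- The upper box dimension. -/
def upperBoxDim {X : Type} [PseudoEMetricSpace X] (F : Set X) : ℝ :=
  sInf {s : ℝ | 0 ≤ s ∧ ∀ ε > 0, ∃ δ₀ > (0:ℝ), ∀ δ : ℝ, 0 < δ → δ ≤ δ₀ → EqCov F s δ ε}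

/-- The Assouad dimension. -/
def assouadDim {X : Type} [PseudoEMetricSpace X] (F : Set X) : ℝ :=
  sInf {s : ℝ | 0 ≤ s ∧ ∃ C > (0:ℝ), ∀ x ∈ F, ∀ r R : ℝ, 0 < r → r < R →
    ∃ t : Finset (Set X), (F ∩ EMetric.closedBall x (ENNReal.ofReal R) ⊆ ⋃ U ∈ t, U) ∧
      (∀ U ∈ t, EMetric.diam U ≤ ENNReal.ofReal r) ∧ (t.card : ℝ) ≤ C * (R / r) ^ s}

end


/-!
Put `λ = θ / φ`. Take a cover of `F` by sets with diameters in `[δ ^ (1 / θ), δ]` and let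
`δ' = δ ^ (φ / θ)`, so that `δ' ^ (1 / φ) = δ ^ (1 / θ)`. Keep the sets of diameter at most `δ'`
and split every larger set `U`, of diameter `u ≤ δ`, into `≲ (u / δ') ^ n` sets of diameter `δ'`.
For `t = λ s + (1 - λ) n` this costs `≲ u ^ n * δ' ^ (t - n) = u ^ n * δ ^ (s - n) ≤ u ^ s`, so
cheap `s`-covers at scale `θ` yield cheap `t`-covers at scale `φ`. The first inequality holds
because `δ ^ (1 / θ) ≤ δ ^ (1 / φ)`. Of `ℝⁿ` only the covering bound `(u / δ') ^ n` is used, so the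
argument runs in any space satisfying `HasCoverBound`.
-/
open Metric Filter Topology Real

set_option linter.deprecated false

theorem div_rpow_mul_rpow {R r : ℝ} (hR : 0 ≤ R) (hr : 0 < r) (d s : ℝ) :
    (R / r) ^ d * r ^ s = R ^ d * r ^ (s - d) := by
  rw [div_rpow hR hr.le, rpow_sub hr]
  field_simp

theorem rpow_one_div_le_self {δ θ : ℝ} (hδ0 : 0 < δ) (hδ1 : δ ≤ 1) (hθ : 0 < θ) (hθ1 : θ ≤ 1) :
    δ ^ (1 / θ) ≤ δ := by
  simpa using rpow_le_rpow_of_exponent_ge hδ0 hδ1 ((one_le_div hθ).2 hθ1)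

def HasCoverBound (X : Type) [PseudoEMetricSpace X] (C d : ℝ) : Prop :=
  ∀ (E : Set X) (R r : ℝ), 0 < r → r ≤ R → EMetric.diam E ≤ ENNReal.ofReal R →
    ∃ (κ : Type) (_ : Fintype κ) (V : κ → Set X), E ⊆ ⋃ j, V j ∧
      (∀ j, EMetric.diam (V j) = ENNReal.ofReal r) ∧ (Fintype.card κ : ℝ) ≤ C * (R / r) ^ d

section LowerIntermediateDimension

variable {X : Type} [PseudoEMetricSpace X] {C d : ℝ}

def iCovExponents (F : Set X) (θ : ℝ) : Set ℝ :=
  {s | 0 ≤ s ∧ ∀ ε > 0, ∀ δ₀ > 0, ∃ δ : ℝ, 0 < δ ∧ δ ≤ δ₀ ∧ ICov F s (δ ^ (1 / θ)) δ ε}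

def hCovExponents (F : Set X) : Set ℝ :=
  {s | 0 ≤ s ∧ ∀ ε > 0, HCov F s ε}

theorem lowerIDim_of_ne_zero (F : Set X) {θ : ℝ} (hθ : θ ≠ 0) :
    lowerIDim F θ = sInf (iCovExponents F θ) :=
  if_neg hθ

theorem lowerIDim_zero (F : Set X) : lowerIDim F 0 = sInf (hCovExponents F) :=
  if_pos rfl

theorem bddBelow_iCovExponents (F : Set X) (θ : ℝ) : BddBelow (iCovExponents F θ) :=
  ⟨0, fun _ hs => hs.1⟩

theorem bddBelow_hCovExponents (F : Set X) : BddBelow (hCovExponents F) :=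
  ⟨0, fun _ hs => hs.1⟩

theorem iCovExponents_subset_hCovExponents (F : Set X) (θ : ℝ) :
    iCovExponents F θ ⊆ hCovExponents F := by
  rintro s ⟨hs0, hs⟩
  refine ⟨hs0, fun ε hε => ?_⟩
  obtain ⟨δ, -, -, ι, hι, U, hFU, -, hsum⟩ := hs ε hε 1 one_pos
  exact ⟨ι, hι, U, hFU, hsum⟩

theorem ICov.mono_lo {F : Set X} {s lo lo' hi ε : ℝ} (h : ICov F s lo hi ε) (hlo : lo' ≤ lo) :
    ICov F s lo' hi ε := by
  obtain ⟨ι, hι, U, hFU, hU, hsum⟩ := h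
  exact ⟨ι, hι, U, hFU, fun i => ⟨(ENNReal.ofReal_le_ofReal hlo).trans (hU i).1, (hU i).2⟩, hsum⟩

theorem iCovExponents_anti (F : Set X) {θ φ : ℝ} (hθ : 0 < θ) (hθφ : θ ≤ φ) :
    iCovExponents F φ ⊆ iCovExponents F θ := by
  rintro s ⟨hs0, hs⟩
  refine ⟨hs0, fun ε hε δ₀ hδ₀ => ?_⟩
  obtain ⟨δ, hδ0, hδle, hcov⟩ := hs ε hε (min δ₀ 1) (lt_min hδ₀ one_pos)
  refine ⟨δ, hδ0, hδle.trans (min_le_left _ _), hcov.mono_lo ?_⟩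
  exact rpow_le_rpow_of_exponent_ge hδ0 (hδle.trans (min_le_right _ _))
    (one_div_le_one_div_of_le hθ hθφ)

theorem lowerIDim_eq_zero_of_subsingleton [Subsingleton X] {F : Set X} (hF : F.Nonempty)
    (θ : ℝ) : lowerIDim F θ = 0 := by
  have hdiam : ∀ U : Set X, EMetric.diam U = 0 := fun _ =>
    ediam_subsingleton Set.subsingleton_of_subsingleton
  by_cases hθ : θ = 0
  · subst hθ
    rw [lowerIDim_zero]
    refine le_antisymm ?_ (Real.sInf_nonneg fun _ hs => hs.1)
    have hIoi : Ioi (0 : ℝ) ⊆ hCovExponents F := fun s (hs : 0 < s) =>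
      ⟨le_of_lt hs, fun ε _ => ⟨Unit, inferInstance, fun _ => F, fun x hx => mem_iUnion.2 ⟨(), hx⟩,
        by simp [hdiam, ENNReal.zero_rpow_of_pos hs]⟩⟩
    exact (csInf_le_csInf (bddBelow_hCovExponents F) nonempty_Ioi hIoi).trans_eq csInf_Ioi
  · -- no set of positive diameter exists, so the exponent set is empty and `sInf ∅ = 0`
    suffices iCovExponents F θ = ∅ by rw [lowerIDim_of_ne_zero F hθ, this, Real.sInf_empty]
    refine eq_empty_of_forall_notMem fun s hs => ?_
    obtain ⟨δ, hδ0, -, ι, -, U, hFU, hU, -⟩ := hs.2 1 one_pos 1 one_pos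
    obtain ⟨i, -⟩ := mem_iUnion.1 (hFU hF.some_mem)
    have := (hU i).1
    rw [hdiam, nonpos_iff_eq_zero, ENNReal.ofReal_eq_zero] at this
    exact (rpow_pos_of_pos hδ0 _).not_ge this

theorem tsum_diam_rpow_of_diam_eq {κ : Type} [Fintype κ] {V : κ → Set X} {r : ℝ} (hr : 0 < r)
    (hV : ∀ j, EMetric.diam (V j) = ENNReal.ofReal r) (s : ℝ) :
    ∑' j, EMetric.diam (V j) ^ s = ENNReal.ofReal (Fintype.card κ * r ^ s) := by
  simp only [hV, ENNReal.ofReal_rpow_of_pos hr, tsum_fintype, Finset.sum_const, Finset.card_univ,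
    nsmul_eq_mul]
  rw [ENNReal.ofReal_mul (by positivity), ENNReal.ofReal_natCast]

theorem HasCoverBound.Ioi_subset_iCovExponents (hX : HasCoverBound X C d) (hd : 0 ≤ d)
    {F : Set X} (hF : EMetric.diam F ≠ ⊤) {θ : ℝ} (hθ : 0 < θ) (hθ1 : θ ≤ 1) :
    Ioi d ⊆ iCovExponents F θ := by
  intro s (hs : d < s)
  refine ⟨hd.trans hs.le, fun ε hε δ₀ hδ₀ => ?_⟩
  set R := max (EMetric.diam F).toReal 1
  have hFR : EMetric.diam F ≤ ENNReal.ofReal R :=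
    (ENNReal.ofReal_toReal hF).ge.trans (ENNReal.ofReal_le_ofReal (le_max_left _ _))
  have hlim : Tendsto (fun δ : ℝ => C * R ^ d * δ ^ (s - d)) (𝓝[>] 0) (𝓝 0) := by
    have := (continuousAt_rpow_const 0 (s - d) (Or.inr (by linarith))).tendsto.mono_left
      (nhdsWithin_le_nhds (s := Ioi 0))
    simpa [zero_rpow (by linarith : s - d ≠ 0)] using this.const_mul (C * R ^ d)
  obtain ⟨δ, hδε, hδ0, hδ⟩ :=
    ((hlim.eventually (ge_mem_nhds hε)).and (Ioo_mem_nhdsGT (lt_min hδ₀ one_pos))).exists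
  have hδ1 : δ ≤ 1 := hδ.le.trans (min_le_right _ _)
  obtain ⟨κ, _, V, hFV, hV, hcard⟩ := hX F R δ hδ0 (hδ1.trans (le_max_right _ _)) hFR
  refine ⟨δ, hδ0, hδ.le.trans (min_le_left _ _), κ, inferInstance, V, hFV, fun j => ?_, ?_⟩
  · rw [hV j]
    exact ⟨ENNReal.ofReal_le_ofReal (rpow_one_div_le_self hδ0 hδ1 hθ hθ1), le_rfl⟩
  · rw [tsum_diam_rpow_of_diam_eq hδ0 hV]
    refine ENNReal.ofReal_le_ofReal (le_trans ?_ hδε)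
    calc Fintype.card κ * δ ^ s ≤ C * (R / δ) ^ d * δ ^ s := by gcongr
      _ = C * R ^ d * δ ^ (s - d) := by
        rw [mul_assoc, div_rpow_mul_rpow (by positivity) hδ0, mul_assoc]

theorem HasCoverBound.exists_refinement (hX : HasCoverBound X C d) (hC : 1 ≤ C) {U : Set X}
    {u r L s t : ℝ} (hU : EMetric.diam U = ENNReal.ofReal u) (hu : 0 < u) (hu1 : u ≤ 1)
    (hLu : L ≤ u) (hLr : L ≤ r) (hr : 0 < r) (hst : s ≤ t) (hscale : r ^ (t - d) ≤ u ^ (s - d)) :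
    ∃ (κ : Type) (_ : Fintype κ) (V : κ → Set X), U ⊆ ⋃ j, V j ∧
      (∀ j, ENNReal.ofReal L ≤ EMetric.diam (V j) ∧ EMetric.diam (V j) ≤ ENNReal.ofReal r) ∧
      ∑' j, EMetric.diam (V j) ^ t ≤ ENNReal.ofReal (C * u ^ s) := by
  rcases le_or_gt u r with hur | hru
  · refine ⟨Unit, inferInstance, fun _ => U, fun x hx => mem_iUnion.2 ⟨(), hx⟩, fun _ => ?_, ?_⟩
    · rw [hU]
      exact ⟨ENNReal.ofReal_le_ofReal hLu, ENNReal.ofReal_le_ofReal hur⟩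
    · rw [tsum_diam_rpow_of_diam_eq hu (fun _ => hU), Fintype.card_unit, Nat.cast_one, one_mul]
      refine ENNReal.ofReal_le_ofReal ?_
      calc u ^ t ≤ u ^ s := rpow_le_rpow_of_exponent_ge hu hu1 hst
        _ ≤ C * u ^ s := le_mul_of_one_le_left (by positivity) hC
  · obtain ⟨κ, _, V, hUV, hV, hcard⟩ := hX U u r hr hru.le hU.le
    refine ⟨κ, inferInstance, V, hUV, fun j => ?_, ?_⟩
    · rw [hV j]
      exact ⟨ENNReal.ofReal_le_ofReal hLr, le_rfl⟩
    · rw [tsum_diam_rpow_of_diam_eq hr hV]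
      refine ENNReal.ofReal_le_ofReal ?_
      calc Fintype.card κ * r ^ t ≤ C * (u / r) ^ d * r ^ t := by gcongr
        _ = C * u ^ d * r ^ (t - d) := by rw [mul_assoc, div_rpow_mul_rpow hu.le hr, mul_assoc]
        _ ≤ C * u ^ d * u ^ (s - d) := by gcongr
        _ = C * u ^ s := by rw [mul_assoc, ← rpow_add hu, add_sub_cancel]


theorem HasCoverBound.iCov_refine (hX : HasCoverBound X C d) (hC : 1 ≤ C) {F : Set X}
    {s t lo hi hi' ε : ℝ} (hlo : 0 < lo) (hhi : hi ≤ 1) (hlohi' : lo ≤ hi') (hst : s ≤ t)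
    (hsd : s ≤ d) (hscale : hi' ^ (t - d) ≤ hi ^ (s - d)) (h : ICov F s lo hi ε) :
    ICov F t lo hi' (C * ε) := by
  obtain ⟨ι, _, U, hFU, hU, hsum⟩ := h
  have hrefine : ∀ i, ∃ (κ : Type) (_ : Fintype κ) (V : κ → Set X), U i ⊆ ⋃ j, V j ∧
      (∀ j, ENNReal.ofReal lo ≤ EMetric.diam (V j) ∧ EMetric.diam (V j) ≤ ENNReal.ofReal hi') ∧
      ∑' j, EMetric.diam (V j) ^ t ≤ ENNReal.ofReal C * EMetric.diam (U i) ^ s := by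
    intro i
    obtain ⟨hloU, hUhi⟩ := hU i
    set u := (EMetric.diam (U i)).toReal
    have hUu : EMetric.diam (U i) = ENNReal.ofReal u :=
      (ENNReal.ofReal_toReal (ne_top_of_le_ne_top ENNReal.ofReal_ne_top hUhi)).symm
    rw [hUu] at hloU hUhi ⊢
    have hlou : lo ≤ u := (ENNReal.ofReal_le_ofReal_iff ENNReal.toReal_nonneg).1 hloU
    have hu : 0 < u := hlo.trans_le hlou
    have huhi : u ≤ hi := (ENNReal.ofReal_le_ofReal_iff'.1 hUhi).resolve_right hu.not_ge
    rw [ENNReal.ofReal_rpow_of_pos hu, ← ENNReal.ofReal_mul (by linarith)]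
    exact hX.exists_refinement hC hUu hu (huhi.trans hhi) hlou hlohi' (hlo.trans_le hlohi') hst
      (hscale.trans (rpow_le_rpow_of_nonpos hu huhi (by linarith)))
  choose κ _ V hUV hV hVsum using hrefine
  refine ⟨Σ i, κ i, inferInstance, fun p => V p.1 p.2, ?_, fun p => hV p.1 p.2, ?_⟩
  · rw [iUnion_sigma]
    exact hFU.trans (iUnion_mono hUV)
  · calc ∑' p : Σ i, κ i, EMetric.diam (V p.1 p.2) ^ t
        = ∑' i, ∑' j, EMetric.diam (V i j) ^ t := ENNReal.tsum_sigma' _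
      _ ≤ ∑' i, ENNReal.ofReal C * EMetric.diam (U i) ^ s := ENNReal.tsum_le_tsum hVsum
      _ = ENNReal.ofReal C * ∑' i, EMetric.diam (U i) ^ s := ENNReal.tsum_mul_left
      _ ≤ ENNReal.ofReal C * ENNReal.ofReal ε := by gcongr
      _ = ENNReal.ofReal (C * ε) := (ENNReal.ofReal_mul (by linarith)).symm

theorem HasCoverBound.mem_iCovExponents (hX : HasCoverBound X C d) (hC : 1 ≤ C) {F : Set X}
    {θ φ s : ℝ} (hθ : 0 < θ) (hθφ : θ ≤ φ) (hφ1 : φ ≤ 1) (hs : s ∈ iCovExponents F θ)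
    (hsd : s ≤ d) : θ / φ * s + (1 - θ / φ) * d ∈ iCovExponents F φ := by
  have hφ : 0 < φ := hθ.trans_le hθφ
  have hst : s ≤ θ / φ * s + (1 - θ / φ) * d := by
    nlinarith [(div_le_one hφ).2 hθφ]
  refine ⟨hs.1.trans hst, fun ε hε δ₀ hδ₀ => ?_⟩
  obtain ⟨δ, hδ0, hδle, hcov⟩ := hs.2 (ε / C) (by positivity) (min 1 (δ₀ ^ (θ / φ)))
    (lt_min one_pos (rpow_pos_of_pos hδ₀ _))
  have hδ1 : δ ≤ 1 := hδle.trans (min_le_left _ _)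
  refine ⟨δ ^ (φ / θ), rpow_pos_of_pos hδ0 _, ?_, ?_⟩
  · calc δ ^ (φ / θ) ≤ (δ₀ ^ (θ / φ)) ^ (φ / θ) :=
          rpow_le_rpow hδ0.le (hδle.trans (min_le_right _ _)) (by positivity)
      _ = δ₀ := by
          rw [← rpow_mul hδ₀.le, div_mul_div_cancel₀' hθ.ne', div_self hφ.ne', rpow_one]
  · have hlo : (δ ^ (φ / θ)) ^ (1 / φ) = δ ^ (1 / θ) := by
      rw [← rpow_mul hδ0.le]
      field_simp
    rw [hlo, ← mul_div_cancel₀ ε (by positivity : C ≠ 0)]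
    refine hX.iCov_refine hC (rpow_pos_of_pos hδ0 _) hδ1
      (rpow_le_rpow_of_exponent_ge hδ0 hδ1 (div_le_div_of_nonneg_right hφ1 hθ.le)) hst hsd
      (le_of_eq ?_) hcov
    rw [← rpow_mul hδ0.le]
    congr 1
    field_simp
    ring

theorem HasCoverBound.lowerIDim_le (hX : HasCoverBound X C d) (hd : 0 ≤ d) {F : Set X}
    (hF : EMetric.diam F ≠ ⊤) {θ : ℝ} (hθ : 0 < θ) (hθ1 : θ ≤ 1) : lowerIDim F θ ≤ d := by
  rw [lowerIDim_of_ne_zero F hθ.ne']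
  exact (csInf_le_csInf (bddBelow_iCovExponents F θ) nonempty_Ioi
    (hX.Ioi_subset_iCovExponents hd hF hθ hθ1)).trans_eq csInf_Ioi

theorem HasCoverBound.lowerIDim_mono (hX : HasCoverBound X C d) (hd : 0 ≤ d) {F : Set X}
    (hF : EMetric.diam F ≠ ⊤) {θ φ : ℝ} (hθ : 0 ≤ θ) (hθφ : θ ≤ φ) (hφ : 0 < φ) (hφ1 : φ ≤ 1) :
    lowerIDim F θ ≤ lowerIDim F φ := by
  have hne : (iCovExponents F φ).Nonempty :=
    nonempty_Ioi.mono (hX.Ioi_subset_iCovExponents hd hF hφ hφ1)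
  rw [lowerIDim_of_ne_zero F hφ.ne']
  obtain rfl | hθ := hθ.eq_or_lt
  · rw [lowerIDim_zero]
    exact csInf_le_csInf (bddBelow_hCovExponents F) hne (iCovExponents_subset_hCovExponents F φ)
  · rw [lowerIDim_of_ne_zero F hθ.ne']
    exact csInf_le_csInf (bddBelow_iCovExponents F θ) hne (iCovExponents_anti F hθ hθφ)

theorem HasCoverBound.lowerIDim_le_add (hX : HasCoverBound X C d) (hC : 1 ≤ C) (hd : 0 ≤ d)
    {F : Set X} (hF : EMetric.diam F ≠ ⊤) {θ φ : ℝ} (hθ : 0 ≤ θ) (hθφ : θ ≤ φ) (hφ : 0 < φ)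
    (hφ1 : φ ≤ 1) :
    lowerIDim F φ ≤ lowerIDim F θ + (1 - θ / φ) * (d - lowerIDim F θ) := by
  have hφd := hX.lowerIDim_le hd hF hφ hφ1
  obtain rfl | hθ := hθ.eq_or_lt
  · simpa using hφd
  have hr : 0 < θ / φ := div_pos hθ hφ
  suffices (lowerIDim F φ - (1 - θ / φ) * d) / (θ / φ) ≤ lowerIDim F θ by
    rw [div_le_iff₀ hr] at this
    linarith
  rw [lowerIDim_of_ne_zero F hθ.ne']
  refine le_csInf (nonempty_Ioi.mono (hX.Ioi_subset_iCovExponents hd hF hθ (hθφ.trans hφ1)))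
    fun s hs => (div_le_iff₀ hr).2 ?_
  rcases le_or_gt s d with hsd | hds
  · have := csInf_le (bddBelow_iCovExponents F φ) (hX.mem_iCovExponents hC hθ hθφ hφ1 hs hsd)
    rw [← lowerIDim_of_ne_zero F hφ.ne'] at this
    linarith
  · nlinarith

end LowerIntermediateDimension

theorem ediam_closedBall_eq {E : Type*} [NormedAddCommGroup E] [NormedSpace ℝ E] [Nontrivial E]
    (x : E) {ρ : ℝ} (hρ : 0 ≤ ρ) : EMetric.diam (closedBall x ρ) = ENNReal.ofReal (2 * ρ) := by
  rw [← diam_closedBall_eq x hρ, Metric.diam,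
    ENNReal.ofReal_toReal isBounded_closedBall.ediam_ne_top]
  rfl

theorem exists_nat_abs_sub_le {y L h : ℝ} (hh : 0 < h) (hy0 : 0 ≤ y) (hyL : y ≤ L) :
    ∃ k : ℕ, k < ⌊L / h⌋₊ + 1 ∧ |y - (k + 1 / 2) * h| ≤ h / 2 := by
  have hmid : ((⌊y / h⌋₊ : ℕ) + 1 / 2 : ℝ) * h = ⌊y / h⌋₊ * h + h / 2 := by ring
  have hlo := Nat.floor_le (div_nonneg hy0 hh.le)
  have hhi := Nat.lt_floor_add_one (y / h)
  rw [le_div_iff₀ hh] at hlo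
  rw [div_lt_iff₀ hh, add_mul, one_mul] at hhi
  refine ⟨⌊y / h⌋₊, Nat.lt_succ_of_le (Nat.floor_le_floor (by gcongr)), abs_le.2 ⟨?_, ?_⟩⟩ <;>
    linarith

namespace EuclideanSpace

theorem dist_le_sqrt_mul {n : ℕ} {x y : EuclideanSpace ℝ (Fin n)} {b : ℝ} (hb : 0 ≤ b)
    (h : ∀ i, dist (x i) (y i) ≤ b) : dist x y ≤ √n * b := by
  rw [EuclideanSpace.dist_eq]
  calc √(∑ i, dist (x i) (y i) ^ 2) ≤ √(∑ _i : Fin n, b ^ 2) :=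
        sqrt_le_sqrt (Finset.sum_le_sum fun i _ => pow_le_pow_left₀ dist_nonneg (h i) 2)
    _ = √n * b := by simp [sqrt_mul, hb]

theorem exists_closedBall_cover {n : ℕ} (hn : 0 < n) (E : Set (EuclideanSpace ℝ (Fin n)))
    {R r : ℝ} (hr : 0 < r) (hR : 0 ≤ R) (hE : EMetric.diam E ≤ ENNReal.ofReal R) :
    ∃ (κ : Type) (_ : Fintype κ) (c : κ → EuclideanSpace ℝ (Fin n)),
      E ⊆ ⋃ j, closedBall (c j) (r / 2) ∧ (Fintype.card κ : ℝ) ≤ (2 * √n * R / r + 1) ^ n := by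
  rcases E.eq_empty_or_nonempty with rfl | ⟨x₀, hx₀⟩
  · exact ⟨Empty, inferInstance, Empty.elim, empty_subset _, by simp; positivity⟩
  have hsqrt : 0 < √(n : ℝ) := sqrt_pos.2 (Nat.cast_pos.2 hn)
  set h := r / √n
  have hh : 0 < h := div_pos hr hsqrt
  set M := ⌊2 * R / h⌋₊ + 1
  have hgrid : ∀ x ∈ E, ∀ i, ∃ k : ℕ, k < M ∧
      |(x i - (x₀ i - R)) - (k + 1 / 2) * h| ≤ h / 2 := by
    intro x hx i
    have hxx₀ : dist x x₀ ≤ R := by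
      rw [← ENNReal.ofReal_le_ofReal_iff hR, ← edist_dist]
      exact (edist_le_ediam_of_mem hx hx₀).trans hE
    have hi := abs_le.1 <|
      (Real.dist_eq _ _).symm.trans_le ((PiLp.dist_apply_le x x₀ i).trans hxx₀)
    exact exists_nat_abs_sub_le hh (by linarith) (by linarith)
  choose! k hkM hk using hgrid
  refine ⟨Fin n → Fin M, inferInstance,
    fun k => WithLp.toLp 2 fun i => x₀ i - R + (k i + 1 / 2) * h, fun x hx => ?_, ?_⟩
  · refine mem_iUnion.2 ⟨fun i => ⟨k x i, hkM x hx i⟩, mem_closedBall.2 ?_⟩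
    calc dist x _ ≤ √n * (h / 2) := dist_le_sqrt_mul (by positivity) fun i => by
          simpa only [Real.dist_eq, sub_add_eq_sub_sub] using hk x hx i
      _ = r / 2 := by rw [← mul_div_assoc, mul_div_cancel₀ r hsqrt.ne']
  · have hM : (M : ℝ) ≤ 2 * √n * R / r + 1 := by
      have hRh : 2 * R / h = 2 * √n * R / r := by
        simp only [h]
        field_simp
      have := Nat.floor_le (by positivity : 0 ≤ 2 * R / h)
      push_cast [M]
      linarith
    simpa using pow_le_pow_left₀ M.cast_nonneg hM n

theorem hasCoverBound {n : ℕ} (hn : 0 < n) :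
    HasCoverBound (EuclideanSpace ℝ (Fin n)) ((2 * √n + 1) ^ n) n := by
  have : Nonempty (Fin n) := ⟨⟨0, hn⟩⟩
  intro E R r hr hrR hE
  obtain ⟨κ, _, c, hEc, hcard⟩ := exists_closedBall_cover hn E hr (hr.le.trans hrR) hE
  refine ⟨κ, inferInstance, fun j => closedBall (c j) (r / 2), hEc, fun j => ?_, hcard.trans ?_⟩
  · rw [ediam_closedBall_eq _ (by positivity), mul_div_cancel₀ r two_ne_zero]
  · rw [rpow_natCast, ← mul_pow]
    have hRr : 1 ≤ R / r := (one_le_div hr).2 hrR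
    have hR : 0 ≤ R := hr.le.trans hrR
    refine pow_le_pow_left₀ (by positivity) ?_ n
    calc 2 * √n * R / r + 1 = 2 * √n * (R / r) + 1 := by ring
      _ ≤ (2 * √n + 1) * (R / r) := by nlinarith [sqrt_nonneg (n : ℝ)]

end EuclideanSpace

theorem stmt6 (n : ℕ) (F : Set (EuclideanSpace ℝ (Fin n))) (hne : F.Nonempty)
    (hF : Bornology.IsBounded F) (θ φ : ℝ) (h0 : 0 ≤ θ) (hθφ : θ < φ) (h1 : φ ≤ 1) :
    lowerIDim F θ ≤ lowerIDim F φ ∧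
      lowerIDim F φ ≤ lowerIDim F θ + (1 - θ / φ) * ((n : ℝ) - lowerIDim F θ) := by
  have hφ : 0 < φ := h0.trans_lt hθφ
  obtain rfl | hn := Nat.eq_zero_or_pos n
  · simp [lowerIDim_eq_zero_of_subsingleton hne]
  have hX := EuclideanSpace.hasCoverBound hn
  have hC : 1 ≤ (2 * √n + 1) ^ n := one_le_pow₀ (by linarith [sqrt_nonneg (n : ℝ)])
  exact ⟨hX.lowerIDim_mono n.cast_nonneg hF.ediam_ne_top h0 hθφ.le hφ h1,
    hX.lowerIDim_le_add hC n.cast_nonneg hF.ediam_ne_top h0 hθφ.le hφ h1⟩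
end

section
/- Let F be a non-empty bounded subset of ℝⁿ and 0 ≤ θ < φ ≤ 1. Then the upper θ-intermediate dimension of F is at most the upper φ-intermediate dimension of F, which is at most (upper θ-intermediate dimension of F) + (1 − θ/φ)(n − upper θ-intermediate dimension of F). In particular, θ ↦ upper θ-intermediate dimension of F is continuous on (0,1]. -/
open Set

/-! Monotonicity in `θ` holds because the cover condition only weakens as `θ` decreases.
For the upper bound, let `s ∈ upperIDimSet F θ` and `t = n - (θ/φ)(n - s)`. Given `Δ`, take a
good `θ`-cover at scale `δ = Δ^(θ/φ)`: its sets have diameters `r ∈ [Δ^(1/φ), δ]`. A set with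
`r ≤ Δ` is kept; otherwise a volume argument covers it by `≲ (r/Δ)^n` balls of diameter `Δ`,
of total cost `≲ r^n Δ^(t-n) = r^s (r/δ)^(n-s) ≤ r^s`, so `t ∈ upperIDimSet F φ`. The two
bounds give `|dim φ - dim θ| ≤ n (φ - θ)/φ`, so the dimension is locally Lipschitz on `(0,1]`. -/

open Filter Topology Metric MeasureTheory Module
open scoped ENNReal

theorem tendsto_rpow_nhdsGT_zero {p : ℝ} (hp : 0 < p) :
    Tendsto (fun x : ℝ => x ^ p) (𝓝[>] 0) (𝓝[>] 0) := by
  refine tendsto_nhdsWithin_iff.2 ⟨?_, eventually_mem_nhdsWithin.mono fun x hx =>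
    Real.rpow_pos_of_pos hx p⟩
  have := (Real.continuousAt_rpow_const 0 p (Or.inr hp.le)).tendsto
  rw [Real.zero_rpow hp.ne'] at this
  exact this.mono_left nhdsWithin_le_nhds

section Covers

variable {X : Type} [PseudoEMetricSpace X]

-- `ICov` uses the deprecated alias `EMetric.diam`, which `ediam` lemmas do not rewrite.
theorem iCov_def {F : Set X} {s lo hi ε : ℝ} :
    ICov F s lo hi ε ↔ ∃ (ι : Type) (_ : Countable ι) (U : ι → Set X), F ⊆ ⋃ i, U i ∧
      (∀ i, ENNReal.ofReal lo ≤ ediam (U i) ∧ ediam (U i) ≤ ENNReal.ofReal hi) ∧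
      ∑' i, ediam (U i) ^ s ≤ ENNReal.ofReal ε :=
  Iff.rfl

theorem ICov.mono {F : Set X} {s lo lo' hi ε ε' : ℝ} (h : ICov F s lo hi ε) (hlo : lo' ≤ lo)
    (hε : ε ≤ ε') : ICov F s lo' hi ε' := by
  obtain ⟨ι, hι, U, hFU, hU, hsum⟩ := iCov_def.1 h
  exact ⟨ι, hι, U, hFU, fun i => ⟨(ENNReal.ofReal_le_ofReal hlo).trans (hU i).1, (hU i).2⟩,
    hsum.trans (ENNReal.ofReal_le_ofReal hε)⟩

theorem ICov.hCov {F : Set X} {s lo hi ε : ℝ} (h : ICov F s lo hi ε) : HCov F s ε := by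
  obtain ⟨ι, hι, U, hFU, -, hsum⟩ := h
  exact ⟨ι, hι, U, hFU, hsum⟩

theorem iCov_self {U : Set X} {s lo hi : ℝ} (hlo0 : 0 < lo) (hlo : ENNReal.ofReal lo ≤ ediam U)
    (hhi : ediam U ≤ ENNReal.ofReal hi) : ICov U s lo hi ((ediam U).toReal ^ s) := by
  have hfin : ediam U ≠ ⊤ := ne_top_of_le_ne_top ENNReal.ofReal_ne_top hhi
  have hpos : 0 < (ediam U).toReal := hlo0.trans_le ((ENNReal.ofReal_le_iff_le_toReal hfin).1 hlo)
  refine iCov_def.2 ⟨Unit, inferInstance, fun _ => U, subset_iUnion_of_subset () subset_rfl,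
    fun _ => ⟨hlo, hhi⟩, ?_⟩
  rw [tsum_fintype, Fintype.sum_unique, ← ENNReal.ofReal_rpow_of_pos hpos,
    ENNReal.ofReal_toReal hfin]

theorem ICov.refine {F : Set X} {s t lo hi lo' hi' K ε : ℝ} (hF : ICov F s lo hi (ε / K))
    (hlo : 0 < lo) (hK : 0 < K)
    (hU : ∀ U : Set X, ENNReal.ofReal lo ≤ ediam U → ediam U ≤ ENNReal.ofReal hi →
      ICov U t lo' hi' (K * (ediam U).toReal ^ s)) :
    ICov F t lo' hi' ε := by
  obtain ⟨ι, _, U, hFU, hUdiam, hUsum⟩ := iCov_def.1 hF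
  choose κ _ V hUV hVdiam hVsum using fun i => iCov_def.1 (hU (U i) (hUdiam i).1 (hUdiam i).2)
  refine iCov_def.2 ⟨Σ i, κ i, inferInstance, fun p => V p.1 p.2, fun x hx => ?_,
    fun p => hVdiam p.1 p.2, ?_⟩
  · obtain ⟨i, hi⟩ := mem_iUnion.1 (hFU hx)
    obtain ⟨j, hj⟩ := mem_iUnion.1 (hUV i hi)
    exact mem_iUnion.2 ⟨⟨i, j⟩, hj⟩
  have hcost : ∀ i, ENNReal.ofReal (K * (ediam (U i)).toReal ^ s) =
      ENNReal.ofReal K * ediam (U i) ^ s := fun i => by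
    have hfin := ne_top_of_le_ne_top ENNReal.ofReal_ne_top (hUdiam i).2
    have hpos := hlo.trans_le ((ENNReal.ofReal_le_iff_le_toReal hfin).1 (hUdiam i).1)
    rw [ENNReal.ofReal_mul hK.le, ← ENNReal.ofReal_rpow_of_pos hpos, ENNReal.ofReal_toReal hfin]
  calc ∑' p : Σ i, κ i, ediam (V p.1 p.2) ^ t = ∑' i, ∑' j, ediam (V i j) ^ t :=
        ENNReal.tsum_sigma' _
    _ ≤ ∑' i, ENNReal.ofReal K * ediam (U i) ^ s :=
        ENNReal.tsum_le_tsum fun i => (hVsum i).trans (hcost i).le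
    _ = ENNReal.ofReal K * ∑' i, ediam (U i) ^ s := ENNReal.tsum_mul_left
    _ ≤ ENNReal.ofReal K * ENNReal.ofReal (ε / K) := by gcongr
    _ = ENNReal.ofReal ε := by rw [← ENNReal.ofReal_mul hK.le, mul_div_cancel₀ _ hK.ne']

end Covers

section NormedSpace

variable {E : Type} [NormedAddCommGroup E] [NormedSpace ℝ E]

theorem ediam_closedBall_eq_s7 [Nontrivial E] (x : E) {r : ℝ} (hr : 0 ≤ r) :
    ediam (closedBall x r) = ENNReal.ofReal (2 * r) := by
  rw [← diam_closedBall_eq x hr, Metric.diam,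
    ENNReal.ofReal_toReal isBounded_closedBall.ediam_ne_top]

variable [FiniteDimensional ℝ E]

theorem card_le_of_isSeparated {x₀ : E} {R ρ : ℝ} (hρ : 0 < ρ) (hρR : ρ ≤ R) {T : Finset E}
    (hT : ∀ c ∈ T, dist c x₀ ≤ R) (hsep : IsSeparated (ENNReal.ofReal ρ) (T : Set E)) :
    (T.card : ℝ) ≤ (3 * R / ρ) ^ finrank ℝ E := by
  have hR : 0 < R := hρ.trans_le hρR
  borelize E
  set μ : Measure E := Measure.addHaar
  have hdisj : (T : Set E).PairwiseDisjoint fun c => ball c (ρ / 2) := fun c hc c' hc' hcc' => by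
    have : ENNReal.ofReal ρ < edist c c' := hsep hc hc' hcc'
    rw [edist_dist, ENNReal.ofReal_lt_ofReal_iff'] at this
    exact ball_disjoint_ball (by linarith)
  have hsub : ⋃ c ∈ T, ball c (ρ / 2) ⊆ ball x₀ (3 * R / 2) := iUnion₂_subset fun c hc y hy => by
    rw [mem_ball] at hy ⊢
    linarith [dist_triangle y c x₀, hT c hc]
  have hvol : (T.card : ℝ≥0∞) * ENNReal.ofReal ((ρ / 2) ^ finrank ℝ E) * μ (ball 0 1) ≤
      ENNReal.ofReal ((3 * R / 2) ^ finrank ℝ E) * μ (ball 0 1) :=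
    calc _ = μ (⋃ c ∈ T, ball c (ρ / 2)) := by
          rw [measure_biUnion_finset hdisj fun _ _ => measurableSet_ball]
          simp only [μ.addHaar_ball_of_pos _ (half_pos hρ), Finset.sum_const, nsmul_eq_mul,
            mul_assoc]
      _ ≤ μ (ball x₀ (3 * R / 2)) := measure_mono hsub
      _ = _ := μ.addHaar_ball_of_pos _ (by linarith)
  rw [ENNReal.mul_le_mul_iff_left (measure_ball_pos _ _ one_pos).ne' measure_ball_lt_top.ne,
    ← ENNReal.ofReal_natCast, ← ENNReal.ofReal_mul (Nat.cast_nonneg _),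
    ENNReal.ofReal_le_ofReal_iff (by positivity)] at hvol
  rwa [show 3 * R / ρ = (3 * R / 2) / (ρ / 2) by field_simp, div_pow, le_div_iff₀ (by positivity)]

theorem exists_finset_cover_closedBall_card_le {U : Set E} {R ρ : ℝ} (hρ : 0 < ρ) (hρR : ρ ≤ R)
    (hU : ediam U ≤ ENNReal.ofReal R) :
    ∃ T : Finset E, U ⊆ ⋃ x ∈ T, closedBall x ρ ∧ (T.card : ℝ) ≤ (3 * R / ρ) ^ finrank ℝ E := by
  have hR : 0 < R := hρ.trans_le hρR
  rcases U.eq_empty_or_nonempty with rfl | ⟨x₀, hx₀⟩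
  · exact ⟨∅, empty_subset _, by simp only [Finset.card_empty, Nat.cast_zero]; positivity⟩
  set N := ⌊(3 * R / ρ) ^ finrank ℝ E⌋₊
  have hUball : ∀ y ∈ U, dist y x₀ ≤ R := fun y hy =>
    (edist_le_ofReal (hρ.le.trans hρR)).1 ((edist_le_ediam_of_mem hy hx₀).trans hU)
  have hsmall : ∀ C ⊆ U, IsSeparated (ENNReal.ofReal ρ) C → C.encard ≤ N := by
    intro C hCU hC
    by_contra! hlarge
    obtain ⟨T, hTC, hTcard⟩ := exists_subset_encard_eq (Order.add_one_le_of_lt hlarge)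
    have hTfin : T.Finite := finite_of_encard_eq_coe (k := N + 1) (by rw [hTcard]; rfl)
    have hcard := card_le_of_isSeparated hρ hρR (T := hTfin.toFinset)
      (fun c hc => hUball c (hCU (hTC (hTfin.mem_toFinset.1 hc))))
      (by rw [hTfin.coe_toFinset]; exact hC.subset hTC)
    rw [hTfin.encard_eq_coe_toFinset_card] at hTcard
    have : hTfin.toFinset.card = N + 1 := by exact_mod_cast hTcard
    rw [this] at hcard
    push_cast at hcard
    linarith [Nat.lt_floor_add_one ((3 * R / ρ) ^ finrank ℝ E)]
  have hpack : packingNumber ρ.toNNReal U ≠ ⊤ := ne_top_of_le_ne_top (ENat.natCast_ne_top N)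
    (iSup_le fun C => iSup_le fun hCU => iSup_le fun hC => hsmall C hCU hC)
  set C := maximalSeparatedSet ρ.toNNReal U
  have hCcard : C.encard ≤ N := hsmall C maximalSeparatedSet_subset isSeparated_maximalSeparatedSet
  have hCfin : C.Finite := finite_of_encard_le_coe hCcard
  refine ⟨hCfin.toFinset, fun y hy => ?_, ?_⟩
  · obtain ⟨c, hc, hyc⟩ := isCover_maximalSeparatedSet hpack hy
    exact mem_iUnion₂.2 ⟨c, hCfin.mem_toFinset.2 hc, (edist_le_ofReal hρ.le).1 hyc⟩
  · rw [hCfin.encard_eq_coe_toFinset_card, Nat.cast_le] at hCcard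
    exact (Nat.cast_le.2 hCcard).trans (Nat.floor_le (by positivity))

theorem iCov_of_ediam_le [Nontrivial E] {U : Set E} {r Δ lo t : ℝ} (hΔ : 0 < Δ) (hΔr : Δ ≤ r)
    (hU : ediam U ≤ ENNReal.ofReal r) (hlo : lo ≤ Δ) :
    ICov U t lo Δ ((6 * r / Δ) ^ finrank ℝ E * Δ ^ t) := by
  obtain ⟨T, hUT, hT⟩ := exists_finset_cover_closedBall_card_le (half_pos hΔ) (by linarith) hU
  have hdiam : ∀ x : E, ediam (closedBall x (Δ / 2)) = ENNReal.ofReal Δ := fun x => by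
    rw [ediam_closedBall_eq_s7 x (by positivity), mul_div_cancel₀ _ two_ne_zero]
  refine iCov_def.2 ⟨T, inferInstance, fun x => closedBall x (Δ / 2), fun y hy => ?_,
    fun x => ?_, ?_⟩
  · obtain ⟨x, hx, hyx⟩ := mem_iUnion₂.1 (hUT hy)
    exact mem_iUnion.2 ⟨⟨x, hx⟩, hyx⟩
  · rw [hdiam]
    exact ⟨ENNReal.ofReal_le_ofReal hlo, le_rfl⟩
  · simp only [hdiam, tsum_fintype, Finset.sum_const, Finset.card_univ, Fintype.card_coe,
      nsmul_eq_mul]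
    rw [ENNReal.ofReal_rpow_of_pos hΔ, ← ENNReal.ofReal_natCast,
      ← ENNReal.ofReal_mul (Nat.cast_nonneg _)]
    refine ENNReal.ofReal_le_ofReal (mul_le_mul_of_nonneg_right ?_ (by positivity))
    rwa [show 6 * r / Δ = 3 * r / (Δ / 2) by field_simp; ring]

theorem iCov_mul_rpow_ediam [Nontrivial E] {U : Set E} {lo Δ δ s t : ℝ} (hlo0 : 0 < lo)
    (hloΔ : lo ≤ Δ) (hlo : ENNReal.ofReal lo ≤ ediam U) (hUδ : ediam U ≤ ENNReal.ofReal δ)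
    (hδ1 : δ ≤ 1) (hst : s ≤ t) (hsd : s ≤ finrank ℝ E)
    (hscale : Δ ^ (t - finrank ℝ E) = δ ^ (s - finrank ℝ E)) :
    ICov U t lo Δ (6 ^ finrank ℝ E * (ediam U).toReal ^ s) := by
  set d := finrank ℝ E
  have hfin : ediam U ≠ ⊤ := ne_top_of_le_ne_top ENNReal.ofReal_ne_top hUδ
  set r := (ediam U).toReal
  have hUr : ediam U = ENNReal.ofReal r := (ENNReal.ofReal_toReal hfin).symm
  have hr0 : 0 < r := hlo0.trans_le ((ENNReal.ofReal_le_iff_le_toReal hfin).1 hlo)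
  have hrδ : r ≤ δ := ((ENNReal.ofReal_le_ofReal_iff'.1 (hUr ▸ hUδ)).resolve_right hr0.not_ge)
  rcases le_or_gt r Δ with hrΔ | hΔr
  · refine (iCov_self hlo0 hlo (hUr ▸ ENNReal.ofReal_le_ofReal hrΔ)).mono le_rfl ?_
    calc r ^ t ≤ r ^ s := Real.rpow_le_rpow_of_exponent_ge hr0 (hrδ.trans hδ1) hst
      _ ≤ 6 ^ d * r ^ s := le_mul_of_one_le_left (by positivity) (one_le_pow₀ (by norm_num))
  · refine (iCov_of_ediam_le (hlo0.trans_le hloΔ) hΔr.le hUr.le hloΔ).mono le_rfl ?_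
    have hΔ : 0 < Δ := hlo0.trans_le hloΔ
    have hδ : 0 < δ := hr0.trans_le hrδ
    have hsplit : r ^ (d : ℝ) = r ^ s * r ^ ((d : ℝ) - s) := by
      rw [← Real.rpow_add hr0, add_sub_cancel]
    calc (6 * r / Δ) ^ d * Δ ^ t = 6 ^ d * r ^ (d : ℝ) * Δ ^ (t - d) := by
          rw [Real.rpow_sub hΔ, Real.rpow_natCast, Real.rpow_natCast, div_pow, mul_pow]
          field_simp
      _ = 6 ^ d * r ^ s * (r ^ ((d : ℝ) - s) * δ ^ (s - d)) := by rw [hscale, hsplit]; ring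
      _ ≤ 6 ^ d * r ^ s * (δ ^ ((d : ℝ) - s) * δ ^ (s - d)) := by gcongr
      _ = 6 ^ d * r ^ s := by rw [← Real.rpow_add hδ, sub_add_sub_cancel, sub_self,
          Real.rpow_zero, mul_one]

end NormedSpace

section UpperIntermediateDimension

variable {X : Type} [PseudoEMetricSpace X]

def upperIDimSet (F : Set X) (θ : ℝ) : Set ℝ :=
  if θ = 0 then {s | 0 ≤ s ∧ ∀ ε > 0, HCov F s ε}
  else {s | 0 ≤ s ∧ ∀ ε > 0, ∀ᶠ δ in 𝓝[>] 0, ICov F s (δ ^ (1 / θ)) δ ε}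

theorem mem_upperIDimSet_zero {F : Set X} {s : ℝ} :
    s ∈ upperIDimSet F 0 ↔ 0 ≤ s ∧ ∀ ε > 0, HCov F s ε := by
  rw [upperIDimSet, if_pos rfl]; rfl

theorem mem_upperIDimSet {F : Set X} {θ s : ℝ} (hθ : θ ≠ 0) :
    s ∈ upperIDimSet F θ ↔ 0 ≤ s ∧ ∀ ε > 0, ∀ᶠ δ in 𝓝[>] 0, ICov F s (δ ^ (1 / θ)) δ ε := by
  rw [upperIDimSet, if_neg hθ]; rfl

theorem upperIDim_eq_sInf (F : Set X) (θ : ℝ) : upperIDim F θ = sInf (upperIDimSet F θ) := by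
  unfold upperIDim upperIDimSet
  split_ifs
  · rfl
  · simp only [(nhdsGT_basis_Ioc (0 : ℝ)).eventually_iff, mem_Ioc, and_imp]

theorem nonneg_of_mem_upperIDimSet {F : Set X} {θ s : ℝ} (hs : s ∈ upperIDimSet F θ) : 0 ≤ s := by
  unfold upperIDimSet at hs
  split_ifs at hs <;> exact hs.1

theorem bddBelow_upperIDimSet (F : Set X) (θ : ℝ) : BddBelow (upperIDimSet F θ) :=
  ⟨0, fun _ => nonneg_of_mem_upperIDimSet⟩

theorem upperIDim_nonneg (F : Set X) (θ : ℝ) : 0 ≤ upperIDim F θ := by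
  rw [upperIDim_eq_sInf]
  exact Real.sInf_nonneg fun _ => nonneg_of_mem_upperIDimSet

theorem upperIDimSet_anti {F : Set X} {θ φ : ℝ} (hθ : 0 ≤ θ) (hθφ : θ ≤ φ) :
    upperIDimSet F φ ⊆ upperIDimSet F θ := by
  rcases hθφ.eq_or_lt with rfl | hθφ
  · exact subset_rfl
  intro s hs
  rw [mem_upperIDimSet (hθ.trans_lt hθφ).ne'] at hs
  rcases hθ.eq_or_lt with rfl | hθ
  · refine mem_upperIDimSet_zero.2 ⟨hs.1, fun ε hε => ?_⟩
    obtain ⟨δ, hδ⟩ := (hs.2 ε hε).exists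
    exact hδ.hCov
  refine (mem_upperIDimSet hθ.ne').2 ⟨hs.1, fun ε hε => ?_⟩
  filter_upwards [hs.2 ε hε, self_mem_nhdsWithin, Ioc_mem_nhdsGT zero_lt_one]
    with δ hδ hδ0 hδ1
  exact hδ.mono (Real.rpow_le_rpow_of_exponent_ge hδ0 hδ1.2
    (one_div_le_one_div_of_le hθ hθφ.le)) le_rfl

-- For `θ ≠ 0` no cover meets the lower bound `δ^(1/θ) > 0` on diameters, and `sInf ∅ = 0`.
theorem upperIDim_eq_zero_of_subsingleton [Subsingleton X] {F : Set X} (hF : F.Nonempty)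
    (θ : ℝ) : upperIDim F θ = 0 := by
  rw [upperIDim_eq_sInf]
  rcases eq_or_ne θ 0 with rfl | hθ
  · refine le_antisymm (le_of_forall_gt_imp_ge_of_dense fun η hη =>
      csInf_le (bddBelow_upperIDimSet F 0) ?_)
      (Real.sInf_nonneg fun _ => nonneg_of_mem_upperIDimSet)
    refine mem_upperIDimSet_zero.2 ⟨hη.le, fun ε _ => ⟨Unit, inferInstance, fun _ => univ,
      subset_iUnion_of_subset () (subset_univ F), ?_⟩⟩
    show ∑' _ : Unit, ediam (univ : Set X) ^ η ≤ _
    simp [ediam_subsingleton subsingleton_of_subsingleton, ENNReal.zero_rpow_of_pos hη]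
  · convert Real.sInf_empty
    refine eq_empty_of_forall_notMem fun s hs => ?_
    obtain ⟨δ, hcov, hδ⟩ := (((mem_upperIDimSet hθ).1 hs).2 1 one_pos).and
      self_mem_nhdsWithin |>.exists
    obtain ⟨ι, _, U, hFU, hU, -⟩ := iCov_def.1 hcov
    obtain ⟨i, -⟩ := mem_iUnion.1 (hFU hF.some_mem)
    have := (hU i).1
    rw [ediam_subsingleton subsingleton_of_subsingleton, nonpos_iff_eq_zero,
      ENNReal.ofReal_eq_zero] at this
    exact this.not_gt (Real.rpow_pos_of_pos hδ _)

end UpperIntermediateDimension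

section FiniteDimensional

variable {E : Type} [NormedAddCommGroup E] [NormedSpace ℝ E] [FiniteDimensional ℝ E]
  [Nontrivial E] {F : Set E}

theorem eventually_iCov_of_finrank_lt (hF : Bornology.IsBounded F) {θ t ε : ℝ} (hθ : 0 < θ)
    (hθ1 : θ ≤ 1) (ht : finrank ℝ E < t) (hε : 0 < ε) :
    ∀ᶠ Δ in 𝓝[>] 0, ICov F t (Δ ^ (1 / θ)) Δ ε := by
  set d := finrank ℝ E
  set R := (ediam F).toReal + 1
  have hR : 0 < R := by positivity
  have hFR : ediam F ≤ ENNReal.ofReal R := by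
    rw [← ENNReal.ofReal_toReal hF.ediam_ne_top]
    exact ENNReal.ofReal_le_ofReal (le_add_of_nonneg_right zero_le_one)
  have hsmall : ∀ᶠ Δ in 𝓝[>] 0, (6 * R) ^ d * Δ ^ (t - d) < ε := by
    have := ((tendsto_rpow_nhdsGT_zero (sub_pos.2 ht)).mono_right nhdsWithin_le_nhds).const_mul
      ((6 * R) ^ d)
    rw [mul_zero] at this
    exact this.eventually (gt_mem_nhds hε)
  filter_upwards [hsmall, self_mem_nhdsWithin, Ioc_mem_nhdsGT zero_lt_one] with Δ hΔε hΔ0 hΔ1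
  have hlo : Δ ^ (1 / θ) ≤ Δ := by
    simpa using Real.rpow_le_rpow_of_exponent_ge hΔ0 hΔ1.2 (one_le_one_div hθ hθ1)
  refine (iCov_of_ediam_le hΔ0 (by linarith [hΔ1.2, ENNReal.toReal_nonneg (a := ediam F)])
    hFR hlo).mono le_rfl ?_
  calc (6 * R / Δ) ^ d * Δ ^ t = (6 * R) ^ d * Δ ^ (t - d) := by
        rw [Real.rpow_sub hΔ0, Real.rpow_natCast, div_pow]; ring
    _ ≤ ε := hΔε.le

theorem mem_upperIDimSet_of_finrank_lt (hF : Bornology.IsBounded F) {θ t : ℝ} (hθ : 0 ≤ θ)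
    (hθ1 : θ ≤ 1) (ht : finrank ℝ E < t) : t ∈ upperIDimSet F θ := by
  have hpos : ∀ θ : ℝ, 0 < θ → θ ≤ 1 → t ∈ upperIDimSet F θ := fun θ hθ hθ1 =>
    (mem_upperIDimSet hθ.ne').2 ⟨(Nat.cast_nonneg _).trans ht.le, fun _ hε =>
      eventually_iCov_of_finrank_lt hF hθ hθ1 ht hε⟩
  rcases hθ.eq_or_lt with rfl | hθ
  · exact upperIDimSet_anti le_rfl zero_le_one (hpos 1 one_pos le_rfl)
  · exact hpos θ hθ hθ1

theorem finrank_sub_mul_mem_upperIDimSet {θ φ s : ℝ} (hθ : 0 < θ) (hθφ : θ ≤ φ) (hφ1 : φ ≤ 1)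
    (hs : s ∈ upperIDimSet F θ) (hsd : s ≤ finrank ℝ E) :
    finrank ℝ E - θ / φ * (finrank ℝ E - s) ∈ upperIDimSet F φ := by
  set d := finrank ℝ E
  set t := d - θ / φ * (d - s) with ht
  have hφ : 0 < φ := hθ.trans_le hθφ
  have hst : s ≤ t := by
    have : θ / φ * (d - s) ≤ d - s :=
      mul_le_of_le_one_left (sub_nonneg.2 hsd) ((div_le_one hφ).2 hθφ)
    linarith
  rw [mem_upperIDimSet hθ.ne'] at hs
  refine (mem_upperIDimSet hφ.ne').2 ⟨hs.1.trans hst, fun ε hε => ?_⟩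
  have hrescale := tendsto_rpow_nhdsGT_zero (div_pos hθ hφ)
  filter_upwards [self_mem_nhdsWithin, hrescale.eventually (hs.2 (ε / 6 ^ d) (by positivity)),
    hrescale.eventually (Ioc_mem_nhdsGT zero_lt_one)] with Δ hΔ hcov hδ1
  have hpow : ∀ a : ℝ, (Δ ^ (θ / φ)) ^ (a / θ) = Δ ^ (a / φ) := fun a => by
    rw [← Real.rpow_mul hΔ.le]; congr 1; field_simp
  rw [hpow] at hcov
  refine hcov.refine (Real.rpow_pos_of_pos hΔ _) (by positivity) fun U hlo hhi =>
    iCov_mul_rpow_ediam (Real.rpow_pos_of_pos hΔ _) ?_ hlo hhi hδ1.2 hst hsd ?_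
  · have hΔ1 : Δ ≤ 1 := by
      simpa [hpow, div_self hφ.ne'] using Real.rpow_le_one hδ1.1.le hδ1.2 (div_pos hφ hθ).le
    simpa using Real.rpow_le_rpow_of_exponent_ge hΔ hΔ1 (one_le_one_div hφ hφ1)
  · rw [← Real.rpow_mul hΔ.le, ht]
    congr 1
    ring

theorem upperIDim_le_finrank (hF : Bornology.IsBounded F) {θ : ℝ} (hθ : 0 ≤ θ) (hθ1 : θ ≤ 1) :
    upperIDim F θ ≤ finrank ℝ E := by
  rw [upperIDim_eq_sInf]
  exact le_of_forall_gt_imp_ge_of_dense fun t ht =>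
    csInf_le (bddBelow_upperIDimSet F θ) (mem_upperIDimSet_of_finrank_lt hF hθ hθ1 ht)

theorem upperIDim_mono (hF : Bornology.IsBounded F) {θ φ : ℝ} (hθ : 0 ≤ θ) (hθφ : θ ≤ φ)
    (hφ1 : φ ≤ 1) : upperIDim F θ ≤ upperIDim F φ := by
  rw [upperIDim_eq_sInf, upperIDim_eq_sInf]
  exact csInf_le_csInf (bddBelow_upperIDimSet F θ)
    ⟨_, mem_upperIDimSet_of_finrank_lt hF (hθ.trans hθφ) hφ1 (lt_add_one _)⟩
    (upperIDimSet_anti hθ hθφ)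

theorem upperIDim_le_add_mul (hF : Bornology.IsBounded F) {θ φ : ℝ} (hθ : 0 ≤ θ) (hθφ : θ ≤ φ)
    (hφ1 : φ ≤ 1) :
    upperIDim F φ ≤ upperIDim F θ + (1 - θ / φ) * (finrank ℝ E - upperIDim F θ) := by
  set d := finrank ℝ E
  rcases hθ.eq_or_lt with rfl | hθ
  · simpa using upperIDim_le_finrank hF hθφ hφ1
  have hφ : 0 < φ := hθ.trans_le hθφ
  have hbound : ∀ s ∈ upperIDimSet F θ, upperIDim F φ ≤ d - θ / φ * (d - s) := fun s hs => by
    rcases le_or_gt s d with hsd | hds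
    · rw [upperIDim_eq_sInf]
      exact csInf_le (bddBelow_upperIDimSet F φ)
        (finrank_sub_mul_mem_upperIDimSet hθ hθφ hφ1 hs hsd)
    · have : 0 ≤ θ / φ * (s - d) := by positivity
      linarith [upperIDim_le_finrank hF hφ.le hφ1]
  have hc : 0 < θ / φ := div_pos hθ hφ
  have hinf : (upperIDim F φ - d) / (θ / φ) + d ≤ upperIDim F θ := by
    rw [upperIDim_eq_sInf F θ]
    refine le_csInf ⟨_, mem_upperIDimSet_of_finrank_lt hF hθ.le (hθφ.trans hφ1) (lt_add_one _)⟩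
      fun s hs => ?_
    rw [div_add' _ _ _ hc.ne', div_le_iff₀ hc]
    linarith [hbound s hs]
  rw [div_add' _ _ _ hc.ne', div_le_iff₀ hc] at hinf
  linarith

end FiniteDimensional

theorem continuousOn_Ioc_of_le_add_mul {f : ℝ → ℝ} {d : ℝ} (hd : 0 ≤ d)
    (hf0 : ∀ θ ∈ Ioc (0 : ℝ) 1, 0 ≤ f θ)
    (hf : ∀ θ φ : ℝ, 0 < θ → θ < φ → φ ≤ 1 → f θ ≤ f φ ∧ f φ ≤ f θ + (1 - θ / φ) * (d - f θ)) :
    ContinuousOn f (Ioc 0 1) := by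
  refine continuousOn_of_locally_continuousOn fun a ha =>
    ⟨Ioi (a / 2), isOpen_Ioi, half_lt_self ha.1, ?_⟩
  have ha2 : 0 < a / 2 := half_pos ha.1
  have hstep : ∀ θ φ, a / 2 < θ → θ < φ → φ ≤ 1 → f φ ≤ f θ + d / (a / 2) * (φ - θ) := by
    intro θ φ hθ hθφ hφ1
    have hθ0 : 0 < θ := ha2.trans hθ
    have hφ : 0 < φ := hθ0.trans hθφ
    have hgap : (1 - θ / φ) * (d - f θ) ≤ (1 - θ / φ) * d :=
      mul_le_mul_of_nonneg_left (by linarith [hf0 θ ⟨hθ0, by linarith⟩])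
        (sub_nonneg.2 ((div_le_one hφ).2 hθφ.le))
    have hscale : (1 - θ / φ) * d ≤ d / (a / 2) * (φ - θ) := calc
      (1 - θ / φ) * d = d * (φ - θ) / φ := by field_simp
      _ ≤ d * (φ - θ) / (a / 2) :=
        div_le_div_of_nonneg_left (mul_nonneg hd (by linarith)) ha2 (by linarith)
      _ = d / (a / 2) * (φ - θ) := by ring
    linarith [(hf θ φ hθ0 hθφ hφ1).2]
  refine (LipschitzOnWith.of_le_add_mul (d / (a / 2)).toNNReal fun x hx y hy => ?_).continuousOn
  rw [Real.coe_toNNReal _ (by positivity), Real.dist_eq]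
  rcases lt_or_ge y x with hyx | hxy
  · rw [abs_of_pos (sub_pos.2 hyx)]
    exact hstep y x hy.2 hyx hx.1.2
  · have hmono : f x ≤ f y := by
      rcases hxy.eq_or_lt with rfl | hxy
      · exact le_rfl
      · exact (hf x y hx.1.1 hxy hy.1.2).1
    have : 0 ≤ d / (a / 2) * |x - y| := by positivity
    linarith

theorem stmt7 (n : ℕ) (F : Set (EuclideanSpace ℝ (Fin n))) (hne : F.Nonempty)
    (hF : Bornology.IsBounded F) :
    (∀ θ φ : ℝ, 0 ≤ θ → θ < φ → φ ≤ 1 →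
      upperIDim F θ ≤ upperIDim F φ ∧
        upperIDim F φ ≤ upperIDim F θ + (1 - θ / φ) * ((n : ℝ) - upperIDim F θ)) ∧
    ContinuousOn (upperIDim F) (Set.Ioc (0:ℝ) 1) := by
  have hbounds : ∀ θ φ : ℝ, 0 ≤ θ → θ < φ → φ ≤ 1 →
      upperIDim F θ ≤ upperIDim F φ ∧
        upperIDim F φ ≤ upperIDim F θ + (1 - θ / φ) * ((n : ℝ) - upperIDim F θ) := by
    intro θ φ hθ hθφ hφ1
    rcases n.eq_zero_or_pos with rfl | hn
    · simp [upperIDim_eq_zero_of_subsingleton hne]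
    have : NeZero n := ⟨hn.ne'⟩
    have hbound := upperIDim_le_add_mul hF hθ hθφ.le hφ1
    rw [finrank_euclideanSpace_fin] at hbound
    exact ⟨upperIDim_mono hF hθ hθφ.le hφ1, hbound⟩
  exact ⟨hbounds, continuousOn_Ioc_of_le_add_mul n.cast_nonneg
    (fun θ _ => upperIDim_nonneg F θ) fun θ φ hθ => hbounds θ φ hθ.le⟩
end

section
/- For any non-empty bounded F ⊆ ℝⁿ and θ ∈ (0,1), the lower θ-intermediate dimension of F is at least dim_A F − (dim_A F − lower box dimension of F)/θ, where dim_A is the Assouad dimension. -/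
open Set

/-!
Take a cover of `F` by sets `Uᵢ` with `δ^(1/θ) ≤ |Uᵢ| ≤ δ` and `∑ |Uᵢ|^s` small. An Assouad
bound `(a, C)` splits each `Uᵢ ∩ F` into at most `C (2|Uᵢ|/r)^a` pieces of diameter at most
`r = δ^(1/θ)`. For `s ≤ a` and `u ≥ (1 - θ) a + θ s`, the bound `|Uᵢ| ≤ δ` gives
`|Uᵢ|^a r^(u-a) ≤ |Uᵢ|^s`, so the single-scale cover has `u`-sum at most `C 2^a ∑ |Uᵢ|^s`. When
`s > a` the bound `dim_B ≤ dim_A` is enough. Taking infima gives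
`dim_B F ≤ (1 - θ) dim_A F + θ dim_θ F`, which rearranges to the claim.

`EqCov` asks for sets of diameter exactly `r`, so the pieces are enlarged along a line, which
needs `n ≥ 1`. In `ℝ⁰` no such cover exists and the lower box dimension is `sInf ∅ = 0`.
-/

open Metric Filter Topology
open scoped ENNReal

section Fattening

theorem ediam_insert_le_ediam_insert_add_edist {X : Type*} [PseudoEMetricSpace X] (A : Set X)
    (q q' : X) : ediam (insert q A) ≤ ediam (insert q' A) + edist q q' := by
  refine ediam_le fun x hx y hy => ?_
  have hq : ∀ z ∈ insert q A, edist q z ≤ ediam (insert q' A) + edist q q' := by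
    rintro z (rfl | hz)
    · simp
    · calc edist q z ≤ edist q q' + edist q' z := edist_triangle _ _ _
        _ ≤ ediam (insert q' A) + edist q q' := by
          rw [add_comm]
          gcongr
          exact edist_le_ediam_of_mem (mem_insert _ _) (mem_insert_of_mem _ hz)
  rcases hx with rfl | hx
  · exact hq y hy
  rcases hy with rfl | hy
  · rw [edist_comm]
    exact hq x (mem_insert_of_mem _ hx)
  · exact le_add_right (edist_le_ediam_of_mem (mem_insert_of_mem _ hx) (mem_insert_of_mem _ hy))

variable {E : Type} [NormedAddCommGroup E] [NormedSpace ℝ E] [Nontrivial E]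

theorem exists_superset_ediam_eq_of_mem {U : Set E} {p : E} (hp : p ∈ U) {r : ℝ} (hr : 0 ≤ r)
    (hU : ediam U ≤ ENNReal.ofReal r) : ∃ V, U ⊆ V ∧ ediam V = ENNReal.ofReal r := by
  obtain ⟨e, he⟩ := exists_norm_eq E zero_le_one
  have hline : ∀ t t' : ℝ, edist (p + t • e) (p + t' • e) = edist t t' := by
    intro t t'
    rw [edist_add_left, edist_dist, edist_dist, dist_eq_norm, ← sub_smul, norm_smul, he, mul_one,
      Real.dist_eq, Real.norm_eq_abs]
  set g : ℝ → ℝ≥0∞ := fun t => ediam (insert (p + t • e) U)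
  have hg : Continuous g := continuous_of_le_add_edist 1 ENNReal.one_ne_top fun t t' => by
    rw [one_mul, ← hline]
    exact ediam_insert_le_ediam_insert_add_edist U _ _
  have hg0 : g 0 ≤ ENNReal.ofReal r := by simpa [g, insert_eq_of_mem hp] using hU
  have hgr : ENNReal.ofReal r ≤ g r := by
    calc ENNReal.ofReal r = edist (p + (0 : ℝ) • e) (p + r • e) := by
          rw [hline, edist_dist, Real.dist_eq, zero_sub, abs_neg, abs_of_nonneg hr]
      _ ≤ g r := edist_le_ediam_of_mem (by rw [zero_smul, add_zero]; exact mem_insert_of_mem _ hp)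
          (mem_insert _ _)
  obtain ⟨t, -, ht⟩ := intermediate_value_Icc hr hg.continuousOn ⟨hg0, hgr⟩
  exact ⟨_, subset_insert _ _, ht⟩

theorem exists_superset_ediam_eq {U : Set E} {r : ℝ} (hr : 0 ≤ r)
    (hU : ediam U ≤ ENNReal.ofReal r) : ∃ V, U ⊆ V ∧ ediam V = ENNReal.ofReal r := by
  rcases U.eq_empty_or_nonempty with rfl | ⟨p, hp⟩
  · obtain ⟨V, -, hV⟩ := exists_superset_ediam_eq_of_mem (mem_singleton (0 : E)) hr (by simp)
    exact ⟨V, empty_subset V, hV⟩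
  · exact exists_superset_ediam_eq_of_mem hp hr hU

theorem eqCov_of_cover_ediam_le {F : Set E} {ι : Type} [Countable ι] {U : ι → Set E} {s r ε : ℝ}
    (hr : 0 ≤ r) (hcov : F ⊆ ⋃ i, U i) (hU : ∀ i, ediam (U i) ≤ ENNReal.ofReal r)
    (hsum : ∑' _ : ι, ENNReal.ofReal r ^ s ≤ ENNReal.ofReal ε) : EqCov F s r ε := by
  choose V hUV hV using fun i => exists_superset_ediam_eq hr (hU i)
  exact ⟨ι, inferInstance, V, hcov.trans (iUnion_mono hUV), hV,
    (tsum_congr fun i => congrArg (· ^ s) (hV i)).trans_le hsum⟩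

end Fattening

section Exponents

variable {X : Type} [PseudoEMetricSpace X]

def AssouadBound (F : Set X) (a C : ℝ) : Prop :=
  ∀ x ∈ F, ∀ r R : ℝ, 0 < r → r < R →
    ∃ t : Finset (Set X), (F ∩ closedEBall x (ENNReal.ofReal R) ⊆ ⋃ U ∈ t, U) ∧
      (∀ U ∈ t, ediam U ≤ ENNReal.ofReal r) ∧ (t.card : ℝ) ≤ C * (R / r) ^ a

def IsLowerBoxExponent (F : Set X) (s : ℝ) : Prop :=
  ∀ ε > 0, ∀ δ₀ > 0, ∃ δ : ℝ, 0 < δ ∧ δ ≤ δ₀ ∧ EqCov F s δ ε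

def IsLowerIntermediateExponent (F : Set X) (θ s : ℝ) : Prop :=
  ∀ ε > 0, ∀ δ₀ > 0, ∃ δ : ℝ, 0 < δ ∧ δ ≤ δ₀ ∧ ICov F s (δ ^ (1 / θ)) δ ε

theorem assouadDim_eq (F : Set X) :
    assouadDim F = sInf {a | 0 ≤ a ∧ ∃ C > 0, AssouadBound F a C} :=
  rfl

theorem lowerBoxDim_eq (F : Set X) :
    lowerBoxDim F = sInf {s | 0 ≤ s ∧ IsLowerBoxExponent F s} :=
  rfl

theorem lowerIDim_eq_of_ne_zero (F : Set X) {θ : ℝ} (hθ : θ ≠ 0) :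
    lowerIDim F θ = sInf {s | 0 ≤ s ∧ IsLowerIntermediateExponent F θ s} :=
  if_neg hθ

theorem assouadDim_nonneg (F : Set X) : 0 ≤ assouadDim F :=
  Real.sInf_nonneg fun _ h => h.1

theorem lowerIDim_nonneg (F : Set X) (θ : ℝ) : 0 ≤ lowerIDim F θ := by
  unfold lowerIDim
  split_ifs <;> exact Real.sInf_nonneg fun _ h => h.1

theorem IsLowerBoxExponent.isLowerIntermediateExponent {F : Set X} {θ s : ℝ} (hθ0 : 0 < θ)
    (hθ1 : θ ≤ 1) (h : IsLowerBoxExponent F s) : IsLowerIntermediateExponent F θ s := by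
  intro ε hε δ₀ hδ₀
  obtain ⟨δ, hδ, hδle, ι, _, U, hcov, hdiam, hsum⟩ := h ε hε (min δ₀ 1) (by positivity)
  have hδθ : δ ^ (1 / θ) ≤ δ :=
    Real.rpow_le_self_of_le_one hδ.le (hδle.trans (min_le_right _ _)) ((one_le_div hθ0).2 hθ1)
  refine ⟨δ, hδ, hδle.trans (min_le_left _ _), ι, inferInstance, U, hcov, fun i => ?_, hsum⟩
  rw [hdiam i]
  exact ⟨ENNReal.ofReal_le_ofReal hδθ, le_rfl⟩

theorem lowerBoxDim_eq_zero_of_subsingleton [Subsingleton X] {F : Set X} (hF : F.Nonempty) :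
    lowerBoxDim F = 0 := by
  suffices {s | 0 ≤ s ∧ IsLowerBoxExponent F s} = ∅ by rw [lowerBoxDim_eq, this, Real.sInf_empty]
  refine eq_empty_iff_forall_notMem.2 fun s ⟨_, hs⟩ => ?_
  obtain ⟨δ, hδ, -, ι, -, U, hcov, hdiam, -⟩ := hs 1 one_pos 1 one_pos
  obtain ⟨i, -⟩ := mem_iUnion.1 (hcov hF.some_mem)
  have h0 : ediam (U i) = 0 := ediam_subsingleton Set.subsingleton_of_subsingleton
  exact (ENNReal.ofReal_pos.2 hδ).ne' ((hdiam i).symm.trans h0)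

theorem AssouadBound.exists_cover_inter {F U : Set X} {a C r D : ℝ} (hA : AssouadBound F a C)
    (u : ℝ) (hr : 0 < r) (hrD : r ≤ D) (hU : ediam U ≤ ENNReal.ofReal D) :
    ∃ T : Finset (Set X), F ∩ U ⊆ ⋃ W ∈ T, W ∧ (∀ W ∈ T, ediam W ≤ ENNReal.ofReal r) ∧
      (T.card : ℝ≥0∞) * ENNReal.ofReal r ^ u ≤
        ENNReal.ofReal (C * 2 ^ a * D ^ a * r ^ (u - a)) := by
  rcases (F ∩ U).eq_empty_or_nonempty with h | ⟨x, hxF, hxU⟩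
  · exact ⟨∅, by simp [h], by simp, by simp⟩
  obtain ⟨T, hcov, hdiam, hcard⟩ := hA x hxF r (2 * D) hr (by linarith)
  refine ⟨T, fun y hy => hcov ⟨hy.1, ?_⟩, hdiam, ?_⟩
  · calc edist y x ≤ ediam U := edist_le_ediam_of_mem hy.2 hxU
      _ ≤ ENNReal.ofReal (2 * D) := hU.trans (ENNReal.ofReal_le_ofReal (by linarith))
  · have hD : 0 < D := hr.trans_le hrD
    rw [ENNReal.ofReal_rpow_of_pos hr, ← ENNReal.ofReal_natCast,
      ← ENNReal.ofReal_mul (by positivity)]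
    refine ENNReal.ofReal_le_ofReal ?_
    calc (T.card : ℝ) * r ^ u ≤ C * (2 * D / r) ^ a * r ^ u := by gcongr
      _ = C * 2 ^ a * D ^ a * r ^ (u - a) := by
        rw [Real.div_rpow (by positivity) hr.le, Real.mul_rpow zero_le_two hD.le,
          Real.rpow_sub hr]
        field_simp

end Exponents

theorem rpow_mul_rpow_sub_le_rpow {θ a s u δ D : ℝ} (hθ : 0 < θ) (hsa : s ≤ a)
    (hu : (1 - θ) * a + θ * s ≤ u) (hδ : 0 < δ) (hδ1 : δ ≤ 1) (hD : δ ^ (1 / θ) ≤ D)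
    (hDδ : D ≤ δ) : D ^ a * (δ ^ (1 / θ)) ^ (u - a) ≤ D ^ s := by
  have hD0 : 0 < D := (Real.rpow_pos_of_pos hδ _).trans_le hD
  have hη : 0 ≤ (a - s) + 1 / θ * (u - a) := by
    rw [show (a - s) + 1 / θ * (u - a) = (θ * (a - s) + (u - a)) / θ by field_simp]
    exact div_nonneg (by linarith) hθ.le
  calc D ^ a * (δ ^ (1 / θ)) ^ (u - a) = D ^ s * (D ^ (a - s) * δ ^ (1 / θ * (u - a))) := by
        rw [← Real.rpow_mul hδ.le, ← mul_assoc, ← Real.rpow_add hD0, add_sub_cancel]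
    _ ≤ D ^ s * (δ ^ (a - s) * δ ^ (1 / θ * (u - a))) := by
        gcongr
    _ = D ^ s * δ ^ ((a - s) + 1 / θ * (u - a)) := by rw [Real.rpow_add hδ]
    _ ≤ D ^ s := mul_le_of_le_one_right (by positivity) (Real.rpow_le_one hδ.le hδ1 hη)

theorem le_mul_sInf_add_mul_sInf {S T : Set ℝ} (hS : S.Nonempty) (hT : T.Nonempty) {b p q : ℝ}
    (hp : 0 ≤ p) (hq : 0 ≤ q) (h : ∀ x ∈ S, ∀ y ∈ T, b ≤ p * x + q * y) :
    b ≤ p * sInf S + q * sInf T := by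
  refine le_of_forall_pos_lt_add fun ε hε => ?_
  set η := ε / (p + q + 1)
  have hη : 0 < η := by positivity
  have hpqη : (p + q) * η < ε := by
    rw [← mul_div_assoc, div_lt_iff₀ (by positivity)]
    nlinarith
  obtain ⟨x, hx, hxS⟩ := Real.lt_sInf_add_pos hS hη
  obtain ⟨y, hy, hyT⟩ := Real.lt_sInf_add_pos hT hη
  calc b ≤ p * x + q * y := h x hx y hy
    _ ≤ p * (sInf S + η) + q * (sInf T + η) := by gcongr
    _ = p * sInf S + q * sInf T + (p + q) * η := by ring
    _ < p * sInf S + q * sInf T + ε := by linarith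

section AssouadRefinement

variable {E : Type} [NormedAddCommGroup E] [NormedSpace ℝ E] [Nontrivial E] {F : Set E}
  {a C : ℝ}

theorem AssouadBound.eqCov_of_cover (hA : AssouadBound F a C) {ι : Type} [Countable ι]
    {U : ι → Set E} {D : ι → ℝ} {r u ε : ℝ} (hr : 0 < r) (hcov : F ⊆ ⋃ i, U i)
    (hrD : ∀ i, r ≤ D i) (hUD : ∀ i, ediam (U i) ≤ ENNReal.ofReal (D i))
    (hsum : ∑' i, ENNReal.ofReal (C * 2 ^ a * D i ^ a * r ^ (u - a)) ≤ ENNReal.ofReal ε) :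
    EqCov F u r ε := by
  choose T hTcov hTdiam hTcard using fun i => hA.exists_cover_inter u hr (hrD i) (hUD i)
  refine eqCov_of_cover_ediam_le (ι := Σ i, T i) (U := fun p => p.2.1) hr.le ?_
    (fun p => hTdiam _ _ p.2.2) ?_
  · intro y hy
    obtain ⟨i, hi⟩ := mem_iUnion.1 (hcov hy)
    obtain ⟨W, hW, hyW⟩ := mem_iUnion₂.1 (hTcov i ⟨hy, hi⟩)
    exact mem_iUnion.2 ⟨⟨i, W, hW⟩, hyW⟩
  · calc ∑' (_ : (i : ι) × T i), ENNReal.ofReal r ^ u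
          = ∑' i, ((T i).card : ℝ≥0∞) * ENNReal.ofReal r ^ u := by
          rw [ENNReal.tsum_sigma']
          refine tsum_congr fun i => ?_
          rw [tsum_fintype, Finset.sum_const, Finset.card_univ, Fintype.card_coe, nsmul_eq_mul]
      _ ≤ _ := ENNReal.tsum_le_tsum hTcard
      _ ≤ ENNReal.ofReal ε := hsum

theorem AssouadBound.isLowerBoxExponent (hF : Bornology.IsBounded F) (hA : AssouadBound F a C)
    {u : ℝ} (hu : a < u) : IsLowerBoxExponent F u := by
  intro ε hε δ₀ hδ₀
  set D := (ediam F).toReal + 1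
  have hD : 0 < D := by positivity
  have hFD : ediam F ≤ ENNReal.ofReal D := by
    rw [← ENNReal.ofReal_toReal hF.ediam_ne_top]
    exact ENNReal.ofReal_le_ofReal (le_add_of_nonneg_right zero_le_one)
  have hlim : Tendsto (fun δ : ℝ => C * 2 ^ a * D ^ a * δ ^ (u - a)) (𝓝[>] 0) (𝓝 0) := by
    have := (Real.continuousAt_rpow_const 0 (u - a) (Or.inr (sub_pos.2 hu).le)).tendsto
    rw [Real.zero_rpow (sub_pos.2 hu).ne'] at this
    simpa using (this.mono_left nhdsWithin_le_nhds).const_mul (C * 2 ^ a * D ^ a)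
  obtain ⟨δ, hδsmall, hδ, hδmin⟩ :=
    ((hlim.eventually (gt_mem_nhds hε)).and (Ioo_mem_nhdsGT (lt_min hδ₀ hD))).exists
  refine ⟨δ, hδ, hδmin.le.trans (min_le_left _ _),
    hA.eqCov_of_cover (ι := Unit) (U := fun _ => F) (D := fun _ => D) hδ (fun x hx => ?_)
      (fun _ => hδmin.le.trans (min_le_right _ _)) (fun _ => hFD) ?_⟩
  · exact mem_iUnion.2 ⟨(), hx⟩
  · rw [tsum_fintype, Finset.univ_unique, Finset.sum_singleton]
    exact ENNReal.ofReal_le_ofReal hδsmall.le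

theorem AssouadBound.isLowerBoxExponent_of_isLowerIntermediateExponent
    (hA : AssouadBound F a C) (hC : 0 < C) {θ s u : ℝ} (hθ0 : 0 < θ) (hθ1 : θ ≤ 1)
    (hL : IsLowerIntermediateExponent F θ s) (hsa : s ≤ a) (hu : (1 - θ) * a + θ * s ≤ u) :
    IsLowerBoxExponent F u := by
  intro ε hε δ₀ hδ₀
  set K := C * 2 ^ a
  have hK : 0 < K := by positivity
  obtain ⟨δ, hδ, hδle, ι, _, U, hcov, hdiam, hsum⟩ :=
    hL (ε / K) (by positivity) (min δ₀ 1) (by positivity)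
  have hδ1 : δ ≤ 1 := hδle.trans (min_le_right _ _)
  set r := δ ^ (1 / θ)
  have hr : 0 < r := by positivity
  have hrδ : r ≤ δ := Real.rpow_le_self_of_le_one hδ.le hδ1 ((one_le_div hθ0).2 hθ1)
  set D : ι → ℝ := fun i => (ediam (U i)).toReal
  have hUD : ∀ i, ediam (U i) = ENNReal.ofReal (D i) := fun i =>
    (ENNReal.ofReal_toReal (ne_top_of_le_ne_top ENNReal.ofReal_ne_top (hdiam i).2)).symm
  have hrD : ∀ i, r ≤ D i := fun i =>
    (ENNReal.ofReal_le_ofReal_iff ENNReal.toReal_nonneg).1 ((hdiam i).1.trans (hUD i).le)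
  have hDδ : ∀ i, D i ≤ δ := fun i =>
    (ENNReal.ofReal_le_ofReal_iff hδ.le).1 ((hUD i).symm.le.trans (hdiam i).2)
  refine ⟨r, hr, hrδ.trans (hδle.trans (min_le_left _ _)),
    hA.eqCov_of_cover hr hcov hrD (fun i => (hUD i).le) ?_⟩
  calc ∑' i, ENNReal.ofReal (K * D i ^ a * r ^ (u - a))
      ≤ ∑' i, ENNReal.ofReal K * ediam (U i) ^ s := by
        refine ENNReal.tsum_le_tsum fun i => ?_
        rw [hUD i, ENNReal.ofReal_rpow_of_pos (hr.trans_le (hrD i)),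
          ← ENNReal.ofReal_mul hK.le, mul_assoc]
        exact ENNReal.ofReal_le_ofReal (mul_le_mul_of_nonneg_left
          (rpow_mul_rpow_sub_le_rpow hθ0 hsa hu hδ hδ1 (hrD i) (hDδ i)) hK.le)
    _ = ENNReal.ofReal K * ∑' i, ediam (U i) ^ s := ENNReal.tsum_mul_left
    _ ≤ ENNReal.ofReal K * ENNReal.ofReal (ε / K) := by gcongr; exact hsum
    _ = ENNReal.ofReal ε := by rw [← ENNReal.ofReal_mul hK.le, mul_div_cancel₀ _ hK.ne']

theorem lowerBoxDim_le_of_assouadBound (hF : Bornology.IsBounded F) {θ : ℝ} (hθ0 : 0 < θ)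
    (hθ1 : θ ≤ 1) (ha : 0 ≤ a) (hC : 0 < C) (hA : AssouadBound F a C) :
    lowerBoxDim F ≤ (1 - θ) * assouadDim F + θ * lowerIDim F θ := by
  have hB : ∀ u, 0 ≤ u → IsLowerBoxExponent F u → lowerBoxDim F ≤ u := fun u hu h =>
    csInf_le ⟨0, fun _ h => h.1⟩ ⟨hu, h⟩
  have hL : IsLowerIntermediateExponent F θ (a + 1) :=
    (hA.isLowerBoxExponent hF (lt_add_one a)).isLowerIntermediateExponent hθ0 hθ1
  rw [assouadDim_eq, lowerIDim_eq_of_ne_zero F hθ0.ne']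
  refine le_mul_sInf_add_mul_sInf ?_ ?_ (by linarith) hθ0.le ?_
  · exact ⟨a, ha, C, hC, hA⟩
  · exact ⟨a + 1, by linarith, hL⟩
  rintro a' ⟨ha', C', hC', hA'⟩ s ⟨hs, hL'⟩
  rcases le_total s a' with hsa | has
  · exact hB _ (by nlinarith)
      (hA'.isLowerBoxExponent_of_isLowerIntermediateExponent hC' hθ0 hθ1 hL' hsa le_rfl)
  · calc lowerBoxDim F ≤ a' := le_of_forall_gt_imp_ge_of_dense fun u hu =>
          hB u (ha'.trans hu.le) (hA'.isLowerBoxExponent hF hu)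
      _ ≤ (1 - θ) * a' + θ * s := by nlinarith

end AssouadRefinement

section Grid

theorem card_Icc_floor_div_le {a b h : ℝ} (hh : 0 < h) (hab : a ≤ b) :
    ((Finset.Icc ⌊a / h⌋ ⌊b / h⌋).card : ℝ) ≤ (b - a) / h + 2 := by
  have hcard : ((Finset.Icc ⌊a / h⌋ ⌊b / h⌋).card : ℝ) =
      ((max (⌊b / h⌋ + 1 - ⌊a / h⌋) 0 : ℤ) : ℝ) := by
    rw [← Int.toNat_eq_max, ← Int.card_Icc]
    norm_cast
  have hb := Int.floor_le (b / h)
  have ha := Int.sub_one_lt_floor (a / h)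
  rw [hcard, Int.cast_max, Int.cast_zero, max_le_iff, sub_div]
  push_cast
  exact ⟨by linarith, by linarith [div_le_div_of_nonneg_right hab hh.le]⟩

variable {n : ℕ}

theorem EuclideanSpace.dist_le_of_floor_eq {h : ℝ} (hh : 0 < h) {y z : EuclideanSpace ℝ (Fin n)}
    (hyz : ∀ i, ⌊y i / h⌋ = ⌊z i / h⌋) : dist y z ≤ (n + 1) * h := by
  have hcoord : ∀ i, dist (y i) (z i) ^ 2 ≤ h ^ 2 := fun i => by
    have := Int.abs_sub_lt_one_of_floor_eq_floor (hyz i)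
    rw [← sub_div, abs_div, abs_of_pos hh, div_lt_one hh] at this
    rw [Real.dist_eq]
    exact pow_le_pow_left₀ (abs_nonneg _) this.le 2
  rw [EuclideanSpace.dist_eq]
  refine Real.sqrt_le_iff.2 ⟨by positivity, ?_⟩
  calc ∑ i, dist (y i) (z i) ^ 2 ≤ ∑ _i : Fin n, h ^ 2 := Finset.sum_le_sum fun i _ => hcoord i
    _ = n * h ^ 2 := by simp
    _ ≤ ((n + 1) * h) ^ 2 := by
      rw [mul_pow]
      gcongr
      nlinarith

theorem assouadBound_euclideanSpace (F : Set (EuclideanSpace ℝ (Fin n))) :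
    AssouadBound F n ((2 * n + 4) ^ n) := by
  intro x _ r R hr hrR
  set h := r / (n + 1) with hdef
  have hh : 0 < h := by positivity
  have hR : 0 ≤ R := (hr.trans hrR).le
  have hRr : 1 ≤ R / r := (one_le_div hr).2 hrR.le
  let cell : (Fin n → ℤ) → Set (EuclideanSpace ℝ (Fin n)) := fun m => {y | ∀ i, ⌊y i / h⌋ = m i}
  refine ⟨(Fintype.piFinset fun i => Finset.Icc ⌊(x i - R) / h⌋ ⌊(x i + R) / h⌋).image cell,
    ?_, ?_, ?_⟩
  · rintro y ⟨-, hy⟩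
    have hyx : ∀ i, |y i - x i| ≤ R := fun i =>
      (PiLp.dist_apply_le y x i).trans
        (by simpa [edist_dist, ENNReal.ofReal_le_ofReal_iff hR] using hy)
    refine mem_iUnion₂.2 ⟨cell fun i => ⌊y i / h⌋, Finset.mem_image_of_mem _ ?_, fun i => rfl⟩
    refine Fintype.mem_piFinset.2 fun i => Finset.mem_Icc.2 ⟨?_, ?_⟩ <;>
      refine Int.floor_mono (div_le_div_of_nonneg_right ?_ hh.le) <;>
      linarith [abs_le.1 (hyx i)]
  · simp only [Finset.mem_image]
    rintro _ ⟨m, -, rfl⟩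
    refine ediam_le fun y hy z hz => ?_
    rw [edist_dist]
    refine ENNReal.ofReal_le_ofReal ((EuclideanSpace.dist_le_of_floor_eq hh
      fun i => (hy i).trans (hz i).symm).trans_eq ?_)
    rw [hdef]
    field_simp
  · have hcoord : ∀ i, ((Finset.Icc ⌊(x i - R) / h⌋ ⌊(x i + R) / h⌋).card : ℝ) ≤
        (2 * n + 4) * (R / r) := fun i => by
      refine (card_Icc_floor_div_le hh (by linarith)).trans ?_
      rw [show (x i + R - (x i - R)) / h = 2 * (n + 1) * (R / r) by rw [hdef]; field_simp; ring]
      nlinarith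
    calc ((Finset.image cell _).card : ℝ)
        ≤ (Fintype.piFinset fun i => Finset.Icc ⌊(x i - R) / h⌋ ⌊(x i + R) / h⌋).card := by
          exact_mod_cast Finset.card_image_le
      _ = ∏ i, ((Finset.Icc ⌊(x i - R) / h⌋ ⌊(x i + R) / h⌋).card : ℝ) := by
          rw [Fintype.card_piFinset]
          push_cast
          rfl
      _ ≤ ∏ _i : Fin n, (2 * n + 4) * (R / r) :=
          Finset.prod_le_prod (fun _ _ => by positivity) fun i _ => hcoord i
      _ = (2 * n + 4) ^ n * (R / r) ^ (n : ℝ) := by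
          rw [Finset.prod_const, Finset.card_univ, Fintype.card_fin, mul_pow, Real.rpow_natCast]

end Grid

theorem stmt11 (n : ℕ) (F : Set (EuclideanSpace ℝ (Fin n))) (hne : F.Nonempty)
    (hF : Bornology.IsBounded F) (θ : ℝ) (hθ : θ ∈ Set.Ioo (0:ℝ) 1) :
    assouadDim F - (assouadDim F - lowerBoxDim F) / θ ≤ lowerIDim F θ := by
  obtain ⟨hθ0, hθ1⟩ := hθ
  suffices h : lowerBoxDim F ≤ (1 - θ) * assouadDim F + θ * lowerIDim F θ by
    rw [sub_le_comm, le_div_iff₀ hθ0]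
    linarith
  rcases Nat.eq_zero_or_pos n with rfl | hn
  · rw [lowerBoxDim_eq_zero_of_subsingleton hne]
    have := assouadDim_nonneg F
    have := lowerIDim_nonneg F θ
    nlinarith
  · have : Nonempty (Fin n) := ⟨⟨0, hn⟩⟩
    exact lowerBoxDim_le_of_assouadBound hF hθ0 hθ1.le n.cast_nonneg (by positivity)
      (assouadBound_euclideanSpace F)
end
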